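/- Fenchel duality for entropy projection on a finite set: for convex lower-semicontinuous g: ℝ^d → (−∞, +∞], min over probability mass functions q of KL(q‖p) + g(E_q[γ(z)]) equals max over κ ∈ ℝ^d of −log Σ_z p(z) exp(⟨κ, γ(z)⟩) − g*(−κ), where g* is the Legendre–Fenchel conjugate, provided standard constraint qualification holds (e.g., g is finite and continuous at some point of the convex hull of γ(Z)). -/

import Mathlib

/-!
Weak duality is the Gibbs variational inequality `⟨κ, E_q γ⟩ - KL(q‖p) ≤ log Z(κ)` combined with
the Fenchel–Young inequality. For the converse, minimize `Ψ(κ) = log Z(κ) + g*(-κ)`: it is lower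
semicontinuous, and coercive because `log Z(κ) ≥ ⟨κ, E_p γ⟩` while `g` is bounded near `E_p γ`.
At a minimizer `κ`, differentiating `log Z` along segments shows that the mean `m` of the Gibbs
distribution `q_κ ∝ p e^{⟨κ, γ⟩}` is a subgradient of `g*` at `-κ`. As `g` is the supremum of its
affine minorants, this is the Fenchel equality `g(m) + g*(-κ) = ⟨m, -κ⟩`, so `q_κ` attains the
dual value `-log Z(κ) - g*(-κ)`.
-/

open Set Filter Topology

theorem HasDerivAt.nonneg_of_eventually_nhdsGT_le {f : ℝ → ℝ} {f' : ℝ} (hf : HasDerivAt f f' 0)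
    (h : ∀ᶠ t in 𝓝[>] 0, f 0 ≤ f t) : 0 ≤ f' := by
  refine ge_of_tendsto ((hasDerivAt_iff_tendsto_slope.mp hf).mono_left (nhdsGT_le_nhdsNE 0)) ?_
  filter_upwards [h, self_mem_nhdsWithin] with t ht (htpos : 0 < t)
  rw [slope_def_field]
  exact div_nonneg (sub_nonneg.mpr ht) (sub_nonneg.mpr htpos.le)

theorem LowerSemicontinuous.exists_forall_le_of_isCompact {α β : Type*} [TopologicalSpace α]
    [LinearOrder β] {f : α → β} (hf : LowerSemicontinuous f) {K : Set α} (hK : IsCompact K)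
    {x₀ : α} (hx₀ : x₀ ∈ K) (h : ∀ x ∉ K, f x₀ ≤ f x) : ∃ x, ∀ y, f x ≤ f y := by
  obtain ⟨x, -, hmin⟩ := (hf.lowerSemicontinuousOn K).exists_isMinOn ⟨x₀, hx₀⟩ hK
  refine ⟨x, fun y => ?_⟩
  by_cases hy : y ∈ K
  · exact hmin hy
  · exact (hmin hx₀).trans (h y hy)

theorem ConvexOn.exists_dotProduct_add_le {ι : Type*} [Fintype ι] {g : (ι → ℝ) → ℝ}
    (hg : ConvexOn ℝ univ g) (hgc : LowerSemicontinuous g) {x₀ : ι → ℝ} {a : ℝ}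
    (ha : a < g x₀) : ∃ (u : ι → ℝ) (c : ℝ), (∀ x, x ⬝ᵥ u + c ≤ g x) ∧ x₀ ⬝ᵥ u + c = a := by
  classical
  obtain ⟨l, c, hle, heq⟩ :=
    hg.exists_affine_le_of_lt (𝕜 := ℝ) (mem_univ x₀) ha isClosed_univ (hgc.lowerSemicontinuousOn _)
  have hl : ∀ x, (x ⬝ᵥ fun i => l fun j => if i = j then 1 else 0) = l x := fun x => by
    simpa [dotProduct] using (l.toLinearMap.pi_apply_eq_sum_univ x).symm
  refine ⟨fun i => l fun j => if i = j then 1 else 0, c, fun x => ?_, by simpa [hl] using heq⟩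
  simpa [hl] using hle ⟨x, mem_univ x⟩

theorem Real.sub_le_mul_log_div {a b : ℝ} (ha : 0 ≤ a) (hb : 0 < b) :
    a - b ≤ a * Real.log (a / b) := by
  rcases ha.eq_or_lt with rfl | ha
  · simpa using hb.le
  have := Real.one_sub_inv_le_log_of_pos (div_pos ha hb)
  rw [inv_div] at this
  calc a - b = a * (1 - b / a) := by field_simp
    _ ≤ a * Real.log (a / b) := mul_le_mul_of_nonneg_left this ha.le

namespace EntropyProjection

variable {Z ι : Type*} [Fintype Z] [Fintype ι]

noncomputable section

def relEntropy (q p : Z → ℝ) : ℝ := ∑ z, q z * Real.log (q z / p z)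

def mean (q : Z → ℝ) (γ : Z → ι → ℝ) : ι → ℝ := ∑ z, q z • γ z

def partitionFunction (p : Z → ℝ) (γ : Z → ι → ℝ) (κ : ι → ℝ) : ℝ :=
  ∑ z, p z * Real.exp (κ ⬝ᵥ γ z)

def logPartition (p : Z → ℝ) (γ : Z → ι → ℝ) (κ : ι → ℝ) : ℝ :=
  Real.log (partitionFunction p γ κ)

def gibbs (p : Z → ℝ) (γ : Z → ι → ℝ) (κ : ι → ℝ) (z : Z) : ℝ :=
  p z * Real.exp (κ ⬝ᵥ γ z) / partitionFunction p γ κ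

def fenchelConj (g : (ι → ℝ) → ℝ) (y : ι → ℝ) : EReal :=
  ⨆ x, ((x ⬝ᵥ y - g x : ℝ) : EReal)

/-- The negative of the dual function `κ ↦ -log Z(κ) - g*(-κ)`. -/
def dualObjective (p : Z → ℝ) (γ : Z → ι → ℝ) (g : (ι → ℝ) → ℝ) (κ : ι → ℝ) : EReal :=
  (logPartition p γ κ : EReal) + fenchelConj g (-κ)

end

theorem relEntropy_nonneg {q r : Z → ℝ} (hq : q ∈ stdSimplex ℝ Z) (hr : ∀ z, 0 < r z)
    (hr1 : ∑ z, r z = 1) : 0 ≤ relEntropy q r :=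
  calc 0 = ∑ z, (q z - r z) := by rw [Finset.sum_sub_distrib, hq.2, hr1, sub_self]
    _ ≤ relEntropy q r := Finset.sum_le_sum fun z _ => Real.sub_le_mul_log_div (hq.1 z) (hr z)

theorem relEntropy_self (q : Z → ℝ) : relEntropy q q = 0 :=
  Finset.sum_eq_zero fun z _ => by rcases eq_or_ne (q z) 0 with h | h <;> simp [h]

theorem dotProduct_mean (q : Z → ℝ) (γ : Z → ι → ℝ) (v : ι → ℝ) :
    v ⬝ᵥ mean q γ = ∑ z, q z * (v ⬝ᵥ γ z) := by
  simp [mean, dotProduct_sum, dotProduct_smul]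

section Gibbs

variable [Nonempty Z] {p : Z → ℝ} (hp : ∀ z, 0 < p z) (γ : Z → ι → ℝ)
include hp

theorem partitionFunction_pos (κ : ι → ℝ) : 0 < partitionFunction p γ κ :=
  Finset.sum_pos (fun z _ => mul_pos (hp z) (Real.exp_pos _)) Finset.univ_nonempty

theorem gibbs_pos (κ : ι → ℝ) (z : Z) : 0 < gibbs p γ κ z :=
  div_pos (mul_pos (hp z) (Real.exp_pos _)) (partitionFunction_pos hp γ κ)

theorem gibbs_mem_stdSimplex (κ : ι → ℝ) : gibbs p γ κ ∈ stdSimplex ℝ Z := by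
  refine ⟨fun z => (gibbs_pos hp γ κ z).le, ?_⟩
  simp only [gibbs, ← Finset.sum_div]
  exact div_self (partitionFunction_pos hp γ κ).ne'

theorem log_gibbs (κ : ι → ℝ) (z : Z) :
    Real.log (gibbs p γ κ z) = Real.log (p z) + κ ⬝ᵥ γ z - logPartition p γ κ := by
  rw [gibbs, Real.log_div (mul_pos (hp z) (Real.exp_pos _)).ne' (partitionFunction_pos hp γ κ).ne',
    Real.log_mul (hp z).ne' (Real.exp_pos _).ne', Real.log_exp, logPartition]

theorem relEntropy_gibbs_right (κ : ι → ℝ) {q : Z → ℝ} (hq1 : ∑ z, q z = 1) :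
    relEntropy q (gibbs p γ κ) = relEntropy q p - κ ⬝ᵥ mean q γ + logPartition p γ κ := by
  have hterm : ∀ z, q z * Real.log (q z / gibbs p γ κ z) =
      q z * Real.log (q z / p z) - q z * (κ ⬝ᵥ γ z) + q z * logPartition p γ κ := by
    intro z
    rcases eq_or_ne (q z) 0 with h | h
    · simp [h]
    rw [Real.log_div h (gibbs_pos hp γ κ z).ne', Real.log_div h (hp z).ne', log_gibbs hp]
    ring
  simp only [relEntropy, hterm, Finset.sum_add_distrib, Finset.sum_sub_distrib, ← Finset.sum_mul,
    hq1, one_mul, dotProduct_mean]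

theorem dotProduct_mean_sub_relEntropy_le {q : Z → ℝ} (hq : q ∈ stdSimplex ℝ Z) (κ : ι → ℝ) :
    κ ⬝ᵥ mean q γ - relEntropy q p ≤ logPartition p γ κ := by
  have := relEntropy_nonneg hq (gibbs_pos hp γ κ) (gibbs_mem_stdSimplex hp γ κ).2
  rw [relEntropy_gibbs_right hp γ κ hq.2] at this
  linarith

theorem relEntropy_gibbs_left (κ : ι → ℝ) :
    relEntropy (gibbs p γ κ) p = κ ⬝ᵥ mean (gibbs p γ κ) γ - logPartition p γ κ := by
  have := relEntropy_gibbs_right hp γ κ (gibbs_mem_stdSimplex hp γ κ).2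
  rw [relEntropy_self] at this
  linarith

theorem dotProduct_mean_le_logPartition (hp1 : ∑ z, p z = 1) (κ : ι → ℝ) :
    κ ⬝ᵥ mean p γ ≤ logPartition p γ κ := by
  simpa [relEntropy_self] using dotProduct_mean_sub_relEntropy_le hp γ ⟨fun z => (hp z).le, hp1⟩ κ

theorem continuous_logPartition : Continuous (logPartition p γ) :=
  Continuous.log (continuous_finsetSum _ fun z _ => by fun_prop)
    fun κ => (partitionFunction_pos hp γ κ).ne'

theorem hasDerivAt_logPartition_add_smul (κ v : ι → ℝ) :
    HasDerivAt (fun t : ℝ => logPartition p γ (κ + t • v)) (v ⬝ᵥ mean (gibbs p γ κ) γ) 0 := by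
  have hsum : HasDerivAt (fun t : ℝ => partitionFunction p γ (κ + t • v))
      (∑ z, p z * Real.exp (κ ⬝ᵥ γ z) * (v ⬝ᵥ γ z)) 0 := by
    refine HasDerivAt.fun_sum fun z _ => ?_
    have hlin : HasDerivAt (fun t : ℝ => (κ + t • v) ⬝ᵥ γ z) (v ⬝ᵥ γ z) 0 := by
      simpa [add_dotProduct, smul_dotProduct] using
        ((hasDerivAt_id (0 : ℝ)).mul_const (v ⬝ᵥ γ z)).const_add (κ ⬝ᵥ γ z)
    simpa [mul_assoc] using hlin.exp.const_mul (p z)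
  refine (hsum.log (by simpa using (partitionFunction_pos hp γ κ).ne')).congr_deriv ?_
  rw [zero_smul, add_zero, dotProduct_mean, Finset.sum_div]
  exact Finset.sum_congr rfl fun z _ => by rw [gibbs]; ring

end Gibbs

section Conjugate

variable {g : (ι → ℝ) → ℝ}

theorem coe_le_fenchelConj (x y : ι → ℝ) : ((x ⬝ᵥ y - g x : ℝ) : EReal) ≤ fenchelConj g y :=
  le_iSup (fun x' => ((x' ⬝ᵥ y - g x' : ℝ) : EReal)) x

theorem fenchelConj_le_coe {y : ι → ℝ} {c : ℝ} (h : ∀ x, x ⬝ᵥ y - g x ≤ c) :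
    fenchelConj g y ≤ c :=
  iSup_le fun x => EReal.coe_le_coe_iff.mpr (h x)

theorem sub_le_of_fenchelConj_le_coe {y : ι → ℝ} {c : ℝ} (h : fenchelConj g y ≤ c) (x : ι → ℝ) :
    x ⬝ᵥ y - g x ≤ c :=
  EReal.coe_le_coe_iff.mp ((coe_le_fenchelConj x y).trans h)

theorem fenchelConj_ne_bot (y : ι → ℝ) : fenchelConj g y ≠ ⊥ :=
  ne_bot_of_le_ne_bot (EReal.coe_ne_bot _) (coe_le_fenchelConj 0 y)

theorem fenchelConj_convexCombo_le {y y' : ι → ℝ} {a b t : ℝ} (ha : fenchelConj g y ≤ a)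
    (hb : fenchelConj g y' ≤ b) (ht₀ : 0 ≤ t) (ht₁ : t ≤ 1) :
    fenchelConj g ((1 - t) • y + t • y') ≤ ((1 - t) * a + t * b : ℝ) := by
  refine fenchelConj_le_coe fun x => ?_
  have h₁ := mul_le_mul_of_nonneg_left (sub_le_of_fenchelConj_le_coe ha x) (sub_nonneg.mpr ht₁)
  have h₂ := mul_le_mul_of_nonneg_left (sub_le_of_fenchelConj_le_coe hb x) ht₀
  simp only [dotProduct_add, dotProduct_smul, smul_eq_mul]
  linarith

theorem lowerSemicontinuous_fenchelConj : LowerSemicontinuous (fenchelConj g) :=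
  lowerSemicontinuous_iSup fun _ =>
    (continuous_coe_real_ereal.comp ((continuous_const.dotProduct continuous_id).sub
      continuous_const)).lowerSemicontinuous

end Conjugate

section Duality

variable [Nonempty Z] {p : Z → ℝ} {γ : Z → ι → ℝ} {g : (ι → ℝ) → ℝ}

theorem neg_logPartition_sub_fenchelConj_le (hp : ∀ z, 0 < p z) {q : Z → ℝ}
    (hq : q ∈ stdSimplex ℝ Z) (κ : ι → ℝ) :
    ((-logPartition p γ κ : ℝ) : EReal) - fenchelConj g (-κ) ≤
      ((relEntropy q p + g (mean q γ) : ℝ) : EReal) := by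
  have h := dotProduct_mean_sub_relEntropy_le hp γ hq κ
  calc ((-logPartition p γ κ : ℝ) : EReal) - fenchelConj g (-κ)
      ≤ ((-logPartition p γ κ : ℝ) : EReal) - ((mean q γ ⬝ᵥ (-κ) - g (mean q γ) : ℝ) : EReal) :=
        EReal.sub_le_sub le_rfl (coe_le_fenchelConj _ _)
    _ ≤ ((relEntropy q p + g (mean q γ) : ℝ) : EReal) := by
        rw [← EReal.coe_sub, EReal.coe_le_coe_iff, dotProduct_neg, dotProduct_comm]
        linarith

theorem lowerSemicontinuous_dualObjective (hp : ∀ z, 0 < p z) :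
    LowerSemicontinuous (dualObjective p γ g) :=
  (continuous_coe_real_ereal.comp (continuous_logPartition hp γ)).lowerSemicontinuous.add'
    (lowerSemicontinuous_fenchelConj.comp continuous_neg)
    fun _ => EReal.continuousAt_add (.inl (EReal.coe_ne_top _)) (.inl (EReal.coe_ne_bot _))

theorem coe_norm_sub_le_dualObjective (hp : ∀ z, 0 < p z) (hp1 : ∑ z, p z = 1) {M : ℝ}
    (hM : ∀ x ∈ Metric.closedBall (mean p γ) 1, g x ≤ M) (κ : ι → ℝ) :
    ((‖κ‖ - M : ℝ) : EReal) ≤ dualObjective p γ g κ := by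
  set s : ι → ℝ := fun i => (SignType.sign (κ i) : ℝ)
  have hs : ‖s‖ ≤ 1 := (pi_norm_le_iff_of_nonneg zero_le_one).mpr fun i => by
    rcases lt_trichotomy (κ i) 0 with h | h | h <;> simp [s, h]
  have hsκ : ‖κ‖ ≤ s ⬝ᵥ κ := by
    have : s ⬝ᵥ κ = ∑ i, ‖κ i‖ := by simp [s, dotProduct, sign_mul_self]
    rw [this]
    exact (pi_norm_le_iff_of_nonneg (by positivity)).mpr fun i =>
      Finset.single_le_sum (f := fun i => ‖κ i‖) (fun i _ => norm_nonneg _) (Finset.mem_univ i)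
  have hx : g (mean p γ - s) ≤ M := hM _ (by simpa [dist_eq_norm] using hs)
  have hlog := dotProduct_mean_le_logPartition hp γ hp1 κ
  calc ((‖κ‖ - M : ℝ) : EReal)
      ≤ ((logPartition p γ κ + ((mean p γ - s) ⬝ᵥ (-κ) - g (mean p γ - s)) : ℝ) : EReal) := by
        rw [EReal.coe_le_coe_iff, sub_dotProduct, dotProduct_neg, dotProduct_neg,
          dotProduct_comm (mean p γ)]
        linarith
    _ ≤ dualObjective p γ g κ := by
        rw [dualObjective, EReal.coe_add]
        exact add_le_add le_rfl (coe_le_fenchelConj (mean p γ - s) (-κ))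

theorem exists_forall_dualObjective_le (hp : ∀ z, 0 < p z) (hp1 : ∑ z, p z = 1)
    (hg : ConvexOn ℝ univ g) (hgc : Continuous g) :
    ∃ (κ : ι → ℝ) (c : ℝ), fenchelConj g (-κ) = c ∧
      ∀ κ', dualObjective p γ g κ ≤ dualObjective p γ g κ' := by
  obtain ⟨M, hM⟩ := (isCompact_closedBall (mean p γ) 1).bddAbove_image hgc.continuousOn
  obtain ⟨u, c, hu, -⟩ := hg.exists_dotProduct_add_le hgc.lowerSemicontinuous
    (sub_one_lt (g 0))
  have hB : dualObjective p γ g (-u) ≤ ((logPartition p γ (-u) + -c : ℝ) : EReal) := by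
    rw [dualObjective, neg_neg, EReal.coe_add]
    exact add_le_add le_rfl (fenchelConj_le_coe fun x => by linarith [hu x])
  set r := max ‖-u‖ (logPartition p γ (-u) - c + M)
  have hfar : ∀ κ ∉ Metric.closedBall 0 r, dualObjective p γ g (-u) ≤ dualObjective p γ g κ := by
    intro κ hκ
    simp only [Metric.mem_closedBall, dist_zero_right, not_le, r, max_lt_iff] at hκ
    refine hB.trans ((EReal.coe_le_coe_iff.mpr (by linarith)).trans
      (coe_norm_sub_le_dualObjective hp hp1 (fun x hx => hM (mem_image_of_mem g hx)) κ))
  obtain ⟨κ, hκ⟩ := (lowerSemicontinuous_dualObjective hp).exists_forall_le_of_isCompact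
    (isCompact_closedBall 0 r) (by simp [r]) hfar
  have hne : fenchelConj g (-κ) ≠ ⊤ := fun htop => by
    have := (hκ (-u)).trans hB
    rw [dualObjective, htop, EReal.coe_add_top] at this
    exact EReal.coe_ne_top _ (top_le_iff.mp this)
  exact ⟨κ, _, (EReal.coe_toReal hne (fenchelConj_ne_bot _)).symm, hκ⟩

theorem add_dotProduct_le_of_forall_dualObjective_le (hp : ∀ z, 0 < p z) {κ : ι → ℝ} {c : ℝ}
    (hmin : ∀ κ', dualObjective p γ g κ ≤ dualObjective p γ g κ') (hc : fenchelConj g (-κ) = c)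
    {y : ι → ℝ} {b : ℝ} (hb : fenchelConj g y ≤ b) :
    c + mean (gibbs p γ κ) γ ⬝ᵥ (y + κ) ≤ b := by
  set v := -(y + κ)
  have hsegment : ∀ t ∈ Ioo (0 : ℝ) 1,
      logPartition p γ κ ≤ logPartition p γ (κ + t • v) + (b - c) * t := by
    rintro t ⟨ht₀, ht₁⟩
    have hconj : fenchelConj g (-(κ + t • v)) ≤ ((1 - t) * c + t * b : ℝ) := by
      have : -(κ + t • v) = (1 - t) • -κ + t • y := by simp only [v]; module
      rw [this]
      exact fenchelConj_convexCombo_le hc.le hb ht₀.le ht₁.le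
    have := (hmin (κ + t • v)).trans (add_le_add le_rfl hconj)
    rw [dualObjective, hc, ← EReal.coe_add, ← EReal.coe_add, EReal.coe_le_coe_iff] at this
    linarith
  have hderiv := ((hasDerivAt_logPartition_add_smul hp γ κ v).add
    ((hasDerivAt_id (0 : ℝ)).const_mul (b - c))).nonneg_of_eventually_nhdsGT_le
    (by filter_upwards [Ioo_mem_nhdsGT one_pos] with t ht; simpa using hsegment t ht)
  simp only [v, neg_dotProduct, mul_one, dotProduct_comm (y + κ)] at hderiv
  linarith

theorem fenchelConj_eq_of_forall_dualObjective_le (hp : ∀ z, 0 < p z) (hg : ConvexOn ℝ univ g)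
    (hgc : LowerSemicontinuous g) {κ : ι → ℝ} {c : ℝ}
    (hmin : ∀ κ', dualObjective p γ g κ ≤ dualObjective p γ g κ') (hc : fenchelConj g (-κ) = c) :
    c = mean (gibbs p γ κ) γ ⬝ᵥ (-κ) - g (mean (gibbs p γ κ) γ) := by
  refine le_antisymm (le_of_forall_pos_le_add fun ε hε => ?_)
    (sub_le_of_fenchelConj_le_coe hc.le _)
  obtain ⟨u, c', hu, hm⟩ := hg.exists_dotProduct_add_le hgc (sub_lt_self _ hε)
  have := add_dotProduct_le_of_forall_dualObjective_le hp hmin hc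
    (fenchelConj_le_coe (c := -c') fun x => by linarith [hu x])
  rw [dotProduct_add] at this
  rw [dotProduct_neg]
  linarith

theorem relEntropy_gibbs_add_eq (hp : ∀ z, 0 < p z) (hg : ConvexOn ℝ univ g)
    (hgc : LowerSemicontinuous g) {κ : ι → ℝ} {c : ℝ}
    (hmin : ∀ κ', dualObjective p γ g κ ≤ dualObjective p γ g κ') (hc : fenchelConj g (-κ) = c) :
    relEntropy (gibbs p γ κ) p + g (mean (gibbs p γ κ) γ) = -logPartition p γ κ - c := by
  rw [fenchelConj_eq_of_forall_dualObjective_le hp hg hgc hmin hc, relEntropy_gibbs_left hp,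
    dotProduct_neg, dotProduct_comm]
  ring

end Duality

end EntropyProjection

open EntropyProjection

/-- Fenchel duality for entropy projection on a finite set:
`min_q KL(q‖p) + g(E_q[γ]) = max_κ −log Σ_z p(z) exp⟨κ, γ(z)⟩ − g*(−κ)`,
for `g` convex, finite and continuous; the dual maximum is attained. -/
theorem fenchel_duality_entropy_projection {Z : Type*} [Fintype Z] [Nonempty Z]
    {d : ℕ} (p : Z → ℝ) (hp : ∀ z, 0 < p z) (hp1 : ∑ z, p z = 1)
    (γ : Z → Fin d → ℝ) (g : (Fin d → ℝ) → ℝ)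
    (hg : ConvexOn ℝ Set.univ g) (hgc : Continuous g) :
    ∃ κ : Fin d → ℝ,
      (⨅ q : {q : Z → ℝ // (∀ z, 0 ≤ q z) ∧ ∑ z, q z = 1},
          (((∑ z, q.1 z * Real.log (q.1 z / p z)) + g (∑ z, q.1 z • γ z) : ℝ) :
            EReal)) =
        ((-Real.log (∑ z, p z * Real.exp (κ ⬝ᵥ γ z)) : ℝ) : EReal) -
          (⨆ x : Fin d → ℝ, ((x ⬝ᵥ (-κ) - g x : ℝ) : EReal)) ∧
      ∀ κ' : Fin d → ℝ,
        (((-Real.log (∑ z, p z * Real.exp (κ' ⬝ᵥ γ z)) : ℝ) : EReal) -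
            ⨆ x : Fin d → ℝ, ((x ⬝ᵥ (-κ') - g x : ℝ) : EReal)) ≤
          ((-Real.log (∑ z, p z * Real.exp (κ ⬝ᵥ γ z)) : ℝ) : EReal) -
            ⨆ x : Fin d → ℝ, ((x ⬝ᵥ (-κ) - g x : ℝ) : EReal) := by
  obtain ⟨κ, c, hc, hmin⟩ := exists_forall_dualObjective_le (γ := γ) hp hp1 hg hgc
  have hgap : ((-logPartition p γ κ : ℝ) : EReal) - fenchelConj g (-κ) =
      ((relEntropy (gibbs p γ κ) p + g (mean (gibbs p γ κ) γ) : ℝ) : EReal) := by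
    rw [hc, ← EReal.coe_sub, relEntropy_gibbs_add_eq hp hg hgc.lowerSemicontinuous hmin hc]
  refine ⟨κ, le_antisymm ?_ (le_iInf fun q => neg_logPartition_sub_fenchelConj_le hp q.2 κ),
    fun κ' => ?_⟩
  · exact iInf_le_of_le ⟨gibbs p γ κ, gibbs_mem_stdSimplex hp γ κ⟩ hgap.ge
  · exact (neg_logPartition_sub_fenchelConj_le hp (gibbs_mem_stdSimplex hp γ κ) κ').trans hgap.ge
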